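/- arXiv:2209.08046 — 2 statements merged into one kernel-verified Lean document; each statement's English description precedes it below -/
import Mathlib

section
/- Freivalds' algorithm is sound for false positives: for any n×n matrices A, B, C over a field (or over ℤ) with A·B ≠ C, if r is a vector whose n entries are independent uniform samples from {0,1}, then the probability that A·(B·r) - C·r = 0 is at most 1/2. -/
/-- Soundness of Freivalds' algorithm for false positives: if `A * B ≠ C` for
`n × n` integer matrices, and `r` is a vector whose `n` entries are independent
uniform samples from `{0,1}` (modeled by counting over the `2^n` bit-vectors),
then the probability that `A ⬝ (B ⬝ r) - C ⬝ r = 0` is at most `1/2`. -/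
theorem freivalds_sound (n : ℕ) (A B C : Matrix (Fin n) (Fin n) ℤ) (h : A * B ≠ C) :
    (((Finset.univ : Finset (Fin n → Bool)).filter
        (fun ω => A.mulVec (B.mulVec (fun i => if ω i then (1 : ℤ) else 0)) -
            C.mulVec (fun i => if ω i then (1 : ℤ) else 0) = 0)).card : ℚ) /
      ((2 : ℚ) ^ n) ≤ 1 / 2 := by
  classical
  set D : Matrix (Fin n) (Fin n) ℤ := A * B - C with hDdef
  have hD : D ≠ 0 := sub_ne_zero_of_ne h
  have hex : ∃ i j, D i j ≠ 0 := by
    by_contra hc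
    push_neg at hc
    exact hD (by ext i j; simp [hc])
  obtain ⟨i₀, j₀, hij⟩ := hex
  set r : (Fin n → Bool) → (Fin n → ℤ) := fun ω i => if ω i then (1 : ℤ) else 0 with hr
  have hcond : ∀ ω : Fin n → Bool,
      (A.mulVec (B.mulVec (r ω)) - C.mulVec (r ω) = 0) ↔ D.mulVec (r ω) = 0 := by
    intro ω
    rw [hDdef, Matrix.sub_mulVec, ← Matrix.mulVec_mulVec]
  set flip : (Fin n → Bool) → (Fin n → Bool) := fun ω => Function.update ω j₀ (!ω j₀)
    with hflip
  have hinv : Function.Involutive flip := by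
    intro ω
    funext k
    by_cases hk : k = j₀
    · subst hk; simp [hflip, Function.update]
    · simp [hflip, Function.update, hk]
  set S : Finset (Fin n → Bool) := Finset.univ.filter
      (fun ω => A.mulVec (B.mulVec (r ω)) - C.mulVec (r ω) = 0) with hS
  have hkey : ∀ ω, D.mulVec (r ω) = 0 → D.mulVec (r (flip ω)) ≠ 0 := by
    intro ω h1 h2
    have e1 : D.mulVec (r ω) i₀ = 0 := by rw [h1]; rfl
    have e2 : D.mulVec (r (flip ω)) i₀ = 0 := by rw [h2]; rfl
    have hsum : ∑ k, D i₀ k * (r ω k - r (flip ω) k) = 0 := by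
      have : ∑ k, (D i₀ k * r ω k - D i₀ k * r (flip ω) k) = 0 := by
        rw [Finset.sum_sub_distrib]
        simpa [Matrix.mulVec, dotProduct] using sub_eq_zero_of_eq (e1.trans e2.symm)
      simpa [mul_sub] using this
    have hsingle : ∑ k, D i₀ k * (r ω k - r (flip ω) k)
        = D i₀ j₀ * (r ω j₀ - r (flip ω) j₀) := by
      apply Finset.sum_eq_single
      · intro k _ hk
        have : r ω k = r (flip ω) k := by
          simp [hr, hflip, Function.update, hk]
        rw [this]; ring
      · intro hk; exact absurd (Finset.mem_univ j₀) hk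
    have hval : r ω j₀ - r (flip ω) j₀ = 1 ∨ r ω j₀ - r (flip ω) j₀ = -1 := by
      cases hb : ω j₀ <;> simp [hr, hflip, Function.update, hb]
    rw [hsingle] at hsum
    rcases hval with hv | hv <;> rw [hv] at hsum <;> simp at hsum <;> exact hij hsum
  have hmap : ∀ ω ∈ S, flip ω ∈ Sᶜ := by
    intro ω hω
    simp only [hS, Finset.mem_filter, Finset.mem_univ, true_and] at hω
    simp only [Finset.mem_compl, hS, Finset.mem_filter, Finset.mem_univ, true_and]
    intro hcon
    exact hkey ω ((hcond ω).mp hω) ((hcond (flip ω)).mp hcon)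
  have hcard : S.card ≤ Sᶜ.card :=
    Finset.card_le_card_of_injOn flip hmap (Function.Injective.injOn hinv.injective)
  have htot : S.card + Sᶜ.card = 2 ^ n := by
    rw [Finset.card_add_card_compl]
    simp [Fintype.card_fun]
  have h2 : 2 * S.card ≤ 2 ^ n := by omega
  have hpos : (0 : ℚ) < (2 : ℚ) ^ n := by positivity
  rw [div_le_div_iff₀ hpos (by norm_num)]
  have h3 : ((2 * S.card : ℕ) : ℚ) ≤ ((2 ^ n : ℕ) : ℚ) := by exact_mod_cast h2
  push_cast at h3
  linarith
end

section
/- If a nonzero vector d ∈ ℤ^n is fixed and r ∈ {0,1}^n has independent uniform {0,1} entries, then Pr[⟨d, r⟩ = 0] ≤ 1/2. -/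
/-! Choose `i` with `d i ≠ 0`. Flipping the `i`-th bit is an involution of `{0,1}^n` that shifts
`⟨d, r⟩` by `±d i`, so it maps the zero set of `⟨d, ·⟩` injectively into its complement; hence the
zero set holds at most half of the `2^n` points. -/

open Finset

theorem Finset.two_mul_card_le_card_of_mapsTo_compl {α : Type*} [Fintype α] [DecidableEq α]
    {s : Finset α} {f : α → α} (hf : Set.InjOn f s) (hmaps : ∀ a ∈ s, f a ∉ s) :
    2 * #s ≤ Fintype.card α := by
  have hle : #s ≤ #sᶜ :=
    card_le_card_of_injOn f (fun a ha => mem_compl.mpr (hmaps a ha)) hf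
  rw [card_compl] at hle
  omega

section FlipBit

variable {ι : Type*} [DecidableEq ι]

theorem Function.involutive_update_not (i : ι) :
    Function.Involutive fun ω : ι → Bool => Function.update ω i (!ω i) := by
  intro ω
  simp

variable [Fintype ι] {R : Type*} [Ring R]

theorem sum_mul_ite_update_not (d : ι → R) (ω : ι → Bool) (i : ι) :
    ∑ j, d j * (if Function.update ω i (!ω i) j then (1 : R) else 0) =
      ∑ j, d j * (if ω j then (1 : R) else 0) + (if ω i then -d i else d i) := by
  rw [Fintype.sum_eq_add_sum_compl i, Fintype.sum_eq_add_sum_compl i]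
  have hrest : ∑ j ∈ {i}ᶜ, d j * (if Function.update ω i (!ω i) j then (1 : R) else 0) =
      ∑ j ∈ {i}ᶜ, d j * (if ω j then (1 : R) else 0) :=
    sum_congr rfl fun j hj => by
      rw [Function.update_of_ne (by simpa using hj)]
  rw [hrest]
  cases ω i <;> simp [add_comm]

end FlipBit

/-- Row-level lemma for Freivalds' algorithm: if `d : Fin n → ℤ` is a nonzero
vector and `r ∈ {0,1}^n` has independent uniform bits, then
`Pr[⟨d, r⟩ = 0] ≤ 1/2`. -/
theorem freivalds_row (n : ℕ) (d : Fin n → ℤ) (hd : d ≠ 0) :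
    (((Finset.univ : Finset (Fin n → Bool)).filter
        (fun ω => ∑ i, d i * (if ω i then (1 : ℤ) else 0) = 0)).card : ℚ) /
      ((2 : ℚ) ^ n) ≤ 1 / 2 := by
  obtain ⟨i, hi⟩ := Function.ne_iff.mp hd
  have hcount := two_mul_card_le_card_of_mapsTo_compl
    (s := univ.filter fun ω : Fin n → Bool => ∑ j, d j * (if ω j then (1 : ℤ) else 0) = 0)
    (Function.involutive_update_not i).injective.injOn
    (fun ω hω => by
      rw [mem_filter] at hω ⊢
      rw [sum_mul_ite_update_not, hω.2]
      cases ω i <;> simpa using hi)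
  rw [Fintype.card_fun, Fintype.card_bool, Fintype.card_fin] at hcount
  rw [div_le_iff₀ (by positivity)]
  have hcountℚ := (Nat.cast_le (α := ℚ)).mpr hcount
  push_cast at hcountℚ
  linarith
end
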